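/- arXiv:1404.7577 — 2 statements merged into one kernel-verified Lean document; each statement's English description precedes it below -/
import Mathlib

section
/- Let (Ω, 𝓕, P) be a probability space, T > 0, β > 0 and m a positive integer. Let y : [0,T] × Ω → ℝ^m and z : [0,T] × [0,T] × Ω → ℝ^m be measurable functions, and suppose that for almost every s ∈ [0,T] one has E ∫₀ˢ |z(s,t)|² dt ≤ E |y(s)|². Then ∫₀ᵀ e^{βt} E[ ∫ₜᵀ |y(s)|² ds + ( ∫ₜᵀ |z(s,t)| ds )² ] dt ≤ (2/β) ∫₀ᵀ e^{βt} E |y(t)|² dt. -/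
/-!
Both summands are bounded via Tonelli over the triangle `0 ≤ t ≤ s ≤ T`, each by
`β⁻¹ ∫₀ᵀ e^{βt} E|y(t)|² dt`. For the `y`-part, exchanging the order of integration leaves the
weight `∫₀ˢ e^{βt} dt ≤ e^{βs}/β`. For the `z`-part, Cauchy–Schwarz with the weights `e^{∓βs/2}`
gives `e^{βt} (∫ₜᵀ |z(s,t)| ds)² ≤ β⁻¹ ∫ₜᵀ e^{βs} |z(s,t)|² ds`; after exchanging the order of
integration, the M-solution property bounds `E ∫₀ˢ |z(s,t)|² dt` by `E|y(s)|²`.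
-/

open MeasureTheory Set
open scoped ENNReal

lemma lintegral_Iic_ofReal_exp_mul {a : ℝ} (ha : 0 < a) (c : ℝ) :
    ∫⁻ x in Iic c, ENNReal.ofReal (Real.exp (a * x)) = ENNReal.ofReal (Real.exp (a * c) / a) := by
  rw [← ofReal_integral_eq_lintegral_ofReal (integrableOn_exp_mul_Iic ha c)
    (.of_forall fun _ => (Real.exp_pos _).le), integral_exp_mul_Iic ha]

lemma lintegral_Ici_ofReal_exp_mul {a : ℝ} (ha : a < 0) (c : ℝ) :
    ∫⁻ x in Ici c, ENNReal.ofReal (Real.exp (a * x)) = ENNReal.ofReal (-Real.exp (a * c) / a) := by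
  rw [← setLIntegral_congr Ioi_ae_eq_Ici,
    ← ofReal_integral_eq_lintegral_ofReal (integrableOn_exp_mul_Ioi ha c)
    (.of_forall fun _ => (Real.exp_pos _).le), integral_exp_mul_Ioi ha]

lemma lintegral_mul_sq_le {α : Type*} [MeasurableSpace α] {μ : Measure α} {f g : α → ℝ≥0∞}
    (hf : AEMeasurable f μ) (hg : AEMeasurable g μ) :
    (∫⁻ x, f x * g x ∂μ) ^ 2 ≤ (∫⁻ x, f x ^ 2 ∂μ) * ∫⁻ x, g x ^ 2 ∂μ := by
  have h := ENNReal.lintegral_mul_le_Lp_mul_Lq μ Real.HolderConjugate.two_two hf hg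
  calc (∫⁻ x, f x * g x ∂μ) ^ 2
      ≤ ((∫⁻ x, f x ^ (2:ℝ) ∂μ) ^ (2⁻¹:ℝ) * (∫⁻ x, g x ^ (2:ℝ) ∂μ) ^ (2⁻¹:ℝ)) ^ 2 := by
        simpa only [one_div, Pi.mul_apply] using pow_le_pow_left' h 2
    _ = (∫⁻ x, f x ^ 2 ∂μ) * ∫⁻ x, g x ^ 2 ∂μ := by
        rw [mul_pow, ← ENNReal.rpow_natCast, ← ENNReal.rpow_natCast (_ ^ _), ← ENNReal.rpow_mul,
          ← ENNReal.rpow_mul]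
        norm_num

lemma ofReal_exp_mul_sq_lintegral_Icc_le {β : ℝ} (hβ : 0 < β) (t b : ℝ) {g : ℝ → ℝ≥0∞}
    (hg : AEMeasurable g (volume.restrict (Icc t b))) :
    ENNReal.ofReal (Real.exp (β * t)) * (∫⁻ s in Icc t b, g s) ^ 2 ≤
      ENNReal.ofReal (1 / β) * ∫⁻ s in Icc t b, ENNReal.ofReal (Real.exp (β * s)) * g s ^ 2 := by
  have hexp : ∀ x y : ℝ, ENNReal.ofReal (Real.exp x) * ENNReal.ofReal (Real.exp y) =
      ENNReal.ofReal (Real.exp (x + y)) := fun x y => by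
    rw [← ENNReal.ofReal_mul (Real.exp_nonneg _), Real.exp_add]
  -- Cauchy–Schwarz after writing `g s = exp (-β s / 2) * (exp (β s / 2) * g s)`
  have hCS : (∫⁻ s in Icc t b, ENNReal.ofReal (Real.exp (-(β / 2) * s)) *
        (ENNReal.ofReal (Real.exp (β / 2 * s)) * g s)) ^ 2 ≤
      (∫⁻ s in Icc t b, ENNReal.ofReal (Real.exp (-(β / 2) * s)) ^ 2) *
        ∫⁻ s in Icc t b, (ENNReal.ofReal (Real.exp (β / 2 * s)) * g s) ^ 2 :=
    lintegral_mul_sq_le (by fun_prop) ((by fun_prop : AEMeasurable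
      (fun s : ℝ => ENNReal.ofReal (Real.exp (β / 2 * s))) _).mul hg)
  have hweight : ∫⁻ s in Icc t b, ENNReal.ofReal (Real.exp (-β * s)) ≤
      ENNReal.ofReal (-Real.exp (-β * t) / -β) :=
    (lintegral_mono_set Icc_subset_Ici_self).trans_eq
      (lintegral_Ici_ofReal_exp_mul (neg_neg_of_pos hβ) t)
  calc ENNReal.ofReal (Real.exp (β * t)) * (∫⁻ s in Icc t b, g s) ^ 2
      = ENNReal.ofReal (Real.exp (β * t)) * (∫⁻ s in Icc t b,
          ENNReal.ofReal (Real.exp (-(β / 2) * s)) *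
            (ENNReal.ofReal (Real.exp (β / 2 * s)) * g s)) ^ 2 := by
        congr 2
        refine lintegral_congr fun s => ?_
        rw [← mul_assoc, hexp, ← add_mul, neg_add_cancel, zero_mul, Real.exp_zero,
          ENNReal.ofReal_one, one_mul]
    _ ≤ ENNReal.ofReal (Real.exp (β * t)) * ((∫⁻ s in Icc t b, ENNReal.ofReal (Real.exp (-β * s))) *
          ∫⁻ s in Icc t b, ENNReal.ofReal (Real.exp (β * s)) * g s ^ 2) := by
        refine mul_le_mul_right (hCS.trans_eq ?_) _
        congr 1 <;> refine lintegral_congr fun s => ?_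
        · rw [sq, hexp]; ring_nf
        · rw [mul_pow, sq (ENNReal.ofReal _), hexp]; ring_nf
    _ ≤ ENNReal.ofReal (Real.exp (β * t)) * (ENNReal.ofReal (-Real.exp (-β * t) / -β) *
          ∫⁻ s in Icc t b, ENNReal.ofReal (Real.exp (β * s)) * g s ^ 2) := by gcongr
    _ = ENNReal.ofReal (1 / β) * ∫⁻ s in Icc t b, ENNReal.ofReal (Real.exp (β * s)) * g s ^ 2 := by
        rw [← mul_assoc, ← ENNReal.ofReal_mul (Real.exp_nonneg _), neg_div_neg_eq, mul_div_assoc',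
          ← Real.exp_add, neg_mul, add_neg_cancel, Real.exp_zero]

lemma lintegral_Icc_lintegral_Icc_comm {F : ℝ → ℝ → ℝ≥0∞} (hF : Measurable (Function.uncurry F))
    (a b : ℝ) :
    ∫⁻ t in Icc a b, ∫⁻ s in Icc t b, F s t = ∫⁻ s in Icc a b, ∫⁻ t in Icc a s, F s t := by
  -- both sides integrate `F s t` over the triangle `a ≤ t ≤ s ≤ b`
  set H : ℝ → ℝ → ℝ≥0∞ := fun t s => (Ici t).indicator (F · t) s
  have hH : Measurable (Function.uncurry H) :=
    Measurable.ite (measurableSet_le measurable_fst measurable_snd) (hF.comp measurable_swap)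
      measurable_const
  have hleft : ∀ t ∈ Icc a b, ∫⁻ s in Icc t b, F s t = ∫⁻ s in Icc a b, H t s := fun t ht => by
    rw [lintegral_indicator measurableSet_Ici, Measure.restrict_restrict measurableSet_Ici]
    congr 2
    ext s; simp only [mem_inter_iff, mem_Ici, mem_Icc]; grind
  have hright : ∀ s ∈ Icc a b, ∫⁻ t in Icc a s, F s t = ∫⁻ t in Icc a b, H t s := fun s hs => by
    change _ = ∫⁻ t in Icc a b, (Iic s).indicator (F s) t
    rw [lintegral_indicator measurableSet_Iic, Measure.restrict_restrict measurableSet_Iic]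
    congr 2
    ext t; simp only [mem_inter_iff, mem_Iic, mem_Icc]; grind
  rw [setLIntegral_congr_fun measurableSet_Icc hleft,
    setLIntegral_congr_fun measurableSet_Icc hright]
  exact lintegral_lintegral_swap hH.aemeasurable

lemma lintegral_Icc_ofReal_exp_mul_lintegral_Icc_le {β : ℝ} (hβ : 0 < β) {f : ℝ → ℝ≥0∞}
    (hf : Measurable f) (a b : ℝ) :
    ∫⁻ t in Icc a b, ENNReal.ofReal (Real.exp (β * t)) * ∫⁻ s in Icc t b, f s ≤
      ENNReal.ofReal (1 / β) * ∫⁻ s in Icc a b, ENNReal.ofReal (Real.exp (β * s)) * f s := by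
  have hexp : Measurable fun t : ℝ => ENNReal.ofReal (Real.exp (β * t)) := by fun_prop
  calc ∫⁻ t in Icc a b, ENNReal.ofReal (Real.exp (β * t)) * ∫⁻ s in Icc t b, f s
      = ∫⁻ s in Icc a b, (∫⁻ t in Icc a s, ENNReal.ofReal (Real.exp (β * t))) * f s := by
        simp_rw [← lintegral_const_mul' _ _ ENNReal.ofReal_ne_top,
          ← lintegral_mul_const _ hexp]
        exact lintegral_Icc_lintegral_Icc_comm (by fun_prop) a b
    _ ≤ ∫⁻ s in Icc a b, ENNReal.ofReal (1 / β) * ENNReal.ofReal (Real.exp (β * s)) * f s := by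
        gcongr with s
        rw [← ENNReal.ofReal_mul (by positivity), one_div_mul_eq_div,
          ← lintegral_Iic_ofReal_exp_mul hβ]
        exact lintegral_mono_set Icc_subset_Iic_self
    _ = ENNReal.ofReal (1 / β) * ∫⁻ s in Icc a b, ENNReal.ofReal (Real.exp (β * s)) * f s := by
        simp_rw [mul_assoc]
        exact lintegral_const_mul' _ _ ENNReal.ofReal_ne_top

section Expectation

variable {Ω : Type*} [MeasurableSpace Ω] (P : Measure Ω) [SFinite P]

lemma lintegral_Icc_ofReal_exp_mul_lintegral_lintegral_Icc_le {β : ℝ} (hβ : 0 < β)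
    {Y : ℝ → Ω → ℝ≥0∞} (hY : Measurable (Function.uncurry Y)) (a b : ℝ) :
    ∫⁻ t in Icc a b, ENNReal.ofReal (Real.exp (β * t)) * ∫⁻ ω, (∫⁻ s in Icc t b, Y s ω) ∂P ≤
      ENNReal.ofReal (1 / β) * ∫⁻ s in Icc a b, ENNReal.ofReal (Real.exp (β * s)) *
        ∫⁻ ω, Y s ω ∂P := by
  have hswap : ∀ t, ∫⁻ ω, (∫⁻ s in Icc t b, Y s ω) ∂P = ∫⁻ s in Icc t b, ∫⁻ ω, Y s ω ∂P :=
    fun t => lintegral_lintegral_swap (hY.comp measurable_swap).aemeasurable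
  simp_rw [hswap]
  exact lintegral_Icc_ofReal_exp_mul_lintegral_Icc_le hβ hY.lintegral_prod_right' a b

lemma lintegral_Icc_ofReal_exp_mul_lintegral_sq_lintegral_Icc_le {β : ℝ} (hβ : 0 < β)
    {Z : ℝ → ℝ → Ω → ℝ≥0∞} (hZ : Measurable fun p : ℝ × ℝ × Ω => Z p.1 p.2.1 p.2.2) (a b : ℝ) :
    ∫⁻ t in Icc a b, ENNReal.ofReal (Real.exp (β * t)) * ∫⁻ ω, (∫⁻ s in Icc t b, Z s t ω) ^ 2 ∂P ≤
      ENNReal.ofReal (1 / β) * ∫⁻ s in Icc a b, ENNReal.ofReal (Real.exp (β * s)) *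
        ∫⁻ ω, (∫⁻ t in Icc a s, Z s t ω ^ 2) ∂P := by
  have hZ₂ : Measurable fun q : (ℝ × ℝ) × Ω => Z q.1.1 q.1.2 q.2 ^ 2 :=
    (hZ.comp (f := fun q : (ℝ × ℝ) × Ω => (q.1.1, q.1.2, q.2)) (by fun_prop)).pow_const 2
  have hexp : Measurable fun s : ℝ => ENNReal.ofReal (Real.exp (β * s)) := by fun_prop
  set W : ℝ → ℝ → ℝ≥0∞ := fun s t => ∫⁻ ω, Z s t ω ^ 2 ∂P
  have hW : Measurable (Function.uncurry W) := hZ₂.lintegral_prod_right'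
  calc _ ≤ ∫⁻ t in Icc a b, ENNReal.ofReal (1 / β) *
        ∫⁻ ω, (∫⁻ s in Icc t b, ENNReal.ofReal (Real.exp (β * s)) * Z s t ω ^ 2) ∂P := by
        refine lintegral_mono fun t => ?_
        rw [← lintegral_const_mul' _ _ ENNReal.ofReal_ne_top,
          ← lintegral_const_mul' _ _ ENNReal.ofReal_ne_top]
        exact lintegral_mono fun ω => ofReal_exp_mul_sq_lintegral_Icc_le hβ t b
          (hZ.comp (f := fun s : ℝ => (s, t, ω)) (by fun_prop)).aemeasurable
    _ = ENNReal.ofReal (1 / β) * ∫⁻ t in Icc a b, ∫⁻ s in Icc t b,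
          ENNReal.ofReal (Real.exp (β * s)) * W s t := by
        rw [lintegral_const_mul' _ _ ENNReal.ofReal_ne_top]
        congr 1
        refine lintegral_congr fun t => ?_
        rw [lintegral_lintegral_swap]
        · simp_rw [W, lintegral_const_mul' _ _ ENNReal.ofReal_ne_top]
        · exact ((hexp.comp measurable_snd).mul
            (hZ₂.comp (f := fun p : Ω × ℝ => ((p.2, t), p.1)) (by fun_prop))).aemeasurable
    _ = ENNReal.ofReal (1 / β) * ∫⁻ s in Icc a b, ∫⁻ t in Icc a s,
          ENNReal.ofReal (Real.exp (β * s)) * W s t := by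
        rw [lintegral_Icc_lintegral_Icc_comm
          (F := fun s t => ENNReal.ofReal (Real.exp (β * s)) * W s t)
          ((hexp.comp measurable_fst).mul hW) a b]
    _ = _ := by
        congr 1
        refine lintegral_congr fun s => ?_
        rw [lintegral_const_mul' _ _ ENNReal.ofReal_ne_top, lintegral_lintegral_swap]
        exact (hZ₂.comp (f := fun p : ℝ × Ω => ((s, p.1), p.2)) (by fun_prop)).aemeasurable

end Expectation

theorem lintegral_Icc_ofReal_exp_mul_lintegral_add_sq_le {Ω : Type*} [MeasurableSpace Ω]
    (P : Measure Ω) [SFinite P] {T β : ℝ} (hβ : 0 < β) {Y : ℝ → Ω → ℝ≥0∞}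
    {Z : ℝ → ℝ → Ω → ℝ≥0∞} (hY : Measurable (Function.uncurry Y))
    (hZ : Measurable fun p : ℝ × ℝ × Ω => Z p.1 p.2.1 p.2.2)
    (hZY : ∀ᵐ s ∂(volume.restrict (Icc (0:ℝ) T)),
      ∫⁻ ω, (∫⁻ t in Icc 0 s, Z s t ω ^ 2) ∂P ≤ ∫⁻ ω, Y s ω ∂P) :
    ∫⁻ t in Icc 0 T, ENNReal.ofReal (Real.exp (β * t)) *
        ∫⁻ ω, ((∫⁻ s in Icc t T, Y s ω) + (∫⁻ s in Icc t T, Z s t ω) ^ 2) ∂P ≤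
      ENNReal.ofReal (2 / β) *
        ∫⁻ t in Icc 0 T, ENNReal.ofReal (Real.exp (β * t)) * ∫⁻ ω, Y t ω ∂P := by
  have hYt : Measurable fun t => ENNReal.ofReal (Real.exp (β * t)) *
      ∫⁻ ω, (∫⁻ s in Icc t T, Y s ω) ∂P :=
    (by fun_prop : Measurable fun t : ℝ => ENNReal.ofReal (Real.exp (β * t))).mul <|
      Antitone.measurable fun t t' htt' =>
        lintegral_mono fun ω => lintegral_mono_set (Icc_subset_Icc_left htt')
  calc _ = (∫⁻ t in Icc 0 T, ENNReal.ofReal (Real.exp (β * t)) *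
          ∫⁻ ω, (∫⁻ s in Icc t T, Y s ω) ∂P) +
        ∫⁻ t in Icc 0 T, ENNReal.ofReal (Real.exp (β * t)) *
          ∫⁻ ω, (∫⁻ s in Icc t T, Z s t ω) ^ 2 ∂P := by
        rw [← lintegral_add_left hYt]
        refine lintegral_congr fun t => ?_
        have hYω : Measurable fun ω => ∫⁻ s in Icc t T, Y s ω :=
          (hY.comp measurable_swap).lintegral_prod_right'
        rw [lintegral_add_left hYω, mul_add]
    _ ≤ ENNReal.ofReal (1 / β) * (∫⁻ t in Icc 0 T, ENNReal.ofReal (Real.exp (β * t)) *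
          ∫⁻ ω, Y t ω ∂P) + ENNReal.ofReal (1 / β) * ∫⁻ t in Icc 0 T,
            ENNReal.ofReal (Real.exp (β * t)) * ∫⁻ ω, Y t ω ∂P := by
        refine add_le_add (lintegral_Icc_ofReal_exp_mul_lintegral_lintegral_Icc_le P hβ hY 0 T)
          ((lintegral_Icc_ofReal_exp_mul_lintegral_sq_lintegral_Icc_le P hβ hZ 0 T).trans ?_)
        gcongr ENNReal.ofReal (1 / β) * ?_
        exact lintegral_mono_ae (hZY.mono fun s hs => by gcongr)
    _ = _ := by
        rw [← add_mul, ← ENNReal.ofReal_add (by positivity) (by positivity)]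
        ring_nf

theorem stmt_1_general {Ω : Type*} [MeasurableSpace Ω] (P : Measure Ω) [IsProbabilityMeasure P]
    (T β : ℝ) (hβ : 0 < β) (m : ℕ)
    (y : ℝ → Ω → EuclideanSpace ℝ (Fin m)) (z : ℝ → ℝ → Ω → EuclideanSpace ℝ (Fin m))
    (hy : Measurable (Function.uncurry y))
    (hz : Measurable fun p : ℝ × ℝ × Ω => z p.1 p.2.1 p.2.2)
    (hM : ∀ᵐ s ∂(volume.restrict (Icc (0:ℝ) T)),
      (∫⁻ ω, (∫⁻ t in Icc (0:ℝ) s, ENNReal.ofReal (‖z s t ω‖ ^ 2)) ∂P)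
        ≤ ∫⁻ ω, ENNReal.ofReal (‖y s ω‖ ^ 2) ∂P) :
    (∫⁻ t in Icc (0:ℝ) T, ENNReal.ofReal (Real.exp (β * t)) *
        ∫⁻ ω, ((∫⁻ s in Icc t T, ENNReal.ofReal (‖y s ω‖ ^ 2)) +
          (∫⁻ s in Icc t T, ENNReal.ofReal ‖z s t ω‖) ^ 2) ∂P)
      ≤ ENNReal.ofReal (2 / β) *
        ∫⁻ t in Icc (0:ℝ) T, ENNReal.ofReal (Real.exp (β * t)) *
          ∫⁻ ω, ENNReal.ofReal (‖y t ω‖ ^ 2) ∂P :=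
  lintegral_Icc_ofReal_exp_mul_lintegral_add_sq_le P hβ (by fun_prop) (by fun_prop)
    (by simpa only [← ENNReal.ofReal_pow (norm_nonneg _)] using hM)

/-- Estimate (2.17): if `(y,z)` has the M-solution domination property
`E ∫₀ˢ |z(s,t)|² dt ≤ E |y(s)|²` for a.e. `s ∈ [0,T]`, then
`∫₀ᵀ e^{βt} E[ ∫ₜᵀ |y(s)|² ds + (∫ₜᵀ |z(s,t)| ds)² ] dt
  ≤ (2/β) ∫₀ᵀ e^{βt} E|y(t)|² dt`. -/
theorem stmt_1 {Ω : Type*} [MeasurableSpace Ω] (P : Measure Ω) [IsProbabilityMeasure P]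
    (T β : ℝ) (hT : 0 < T) (hβ : 0 < β) (m : ℕ) (hm : 0 < m)
    (y : ℝ → Ω → EuclideanSpace ℝ (Fin m)) (z : ℝ → ℝ → Ω → EuclideanSpace ℝ (Fin m))
    (hy : Measurable (Function.uncurry y))
    (hz : Measurable fun p : ℝ × ℝ × Ω => z p.1 p.2.1 p.2.2)
    (hM : ∀ᵐ s ∂(volume.restrict (Icc (0:ℝ) T)),
      (∫⁻ ω, (∫⁻ t in Icc (0:ℝ) s, ENNReal.ofReal (‖z s t ω‖ ^ 2)) ∂P)
        ≤ ∫⁻ ω, ENNReal.ofReal (‖y s ω‖ ^ 2) ∂P) :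
    (∫⁻ t in Icc (0:ℝ) T, ENNReal.ofReal (Real.exp (β * t)) *
        ∫⁻ ω, ((∫⁻ s in Icc t T, ENNReal.ofReal (‖y s ω‖ ^ 2)) +
          (∫⁻ s in Icc t T, ENNReal.ofReal ‖z s t ω‖) ^ 2) ∂P)
      ≤ ENNReal.ofReal (2 / β) *
        ∫⁻ t in Icc (0:ℝ) T, ENNReal.ofReal (Real.exp (β * t)) *
          ∫⁻ ω, ENNReal.ofReal (‖y t ω‖ ^ 2) ∂P :=
  stmt_1_general P T β hβ m y z hy hz hM
end

section
/- Let T > 0 and m a positive integer. Let A : [0,T] × [0,T] → ℝ^{m×m} be measurable and bounded, and let ψ, α ∈ L²(0,T;ℝ^m). Suppose Y ∈ L²(0,T;ℝ^m) satisfies Y(t) = ψ(t) + ∫ₜᵀ A(t,s) Y(s) ds for almost every t ∈ [0,T], and ξ ∈ L²(0,T;ℝ^m) satisfies ξ(t) = α(t) + ∫₀ᵗ A(s,t)ᵀ ξ(s) ds for almost every t ∈ [0,T]. Then ∫₀ᵀ ⟨ψ(t), ξ(t)⟩ dt = ∫₀ᵀ ⟨Y(t), α(t)⟩ dt. -/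
/-!
The function `Φ(t, s) = 1_{t ≤ s} ⟪A(t, s) Y(s), ξ(t)⟫` is integrable on the square, since `A` is
bounded and `Y, ξ` are integrable. By the equation for `Y`, integrating `Φ` in `s` gives
`⟪Y - ψ, ξ⟫(t)`; by the adjoint equation for `ξ`, integrating it in `t` gives `⟪Y, ξ - α⟫(s)`.
Fubini equates the two double integrals, and cancelling `∫ ⟪Y, ξ⟫` yields the duality.
-/

open MeasureTheory Set

open scoped RealInnerProductSpace

theorem MeasureTheory.Integrable.clm_apply_of_norm_le {α E F : Type*} [MeasurableSpace α]
    {μ : Measure α}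
    [NormedAddCommGroup E] [NormedSpace ℝ E] [NormedAddCommGroup F] [NormedSpace ℝ F]
    {K : α → E →L[ℝ] F} {Y : α → E} {L : ℝ}
    (hY : Integrable Y μ) (hK : AEStronglyMeasurable K μ) (hKL : ∀ x, ‖K x‖ ≤ L) :
    Integrable (fun x => K x (Y x)) μ :=
  (ContinuousLinearMap.id ℝ (E →L[ℝ] F)).integrable_of_bilin_of_bdd_left L hK
    (.of_forall hKL) hY

theorem MeasureTheory.Measure.restrict_Icc_restrict_Ici {μ : Measure ℝ} {a b t : ℝ}
    (hat : a ≤ t) :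
    (μ.restrict (Icc a b)).restrict (Ici t) = μ.restrict (Icc t b) := by
  rw [Measure.restrict_restrict measurableSet_Ici]
  congr 1
  ext s
  simp only [mem_inter_iff, mem_Ici, mem_Icc]
  grind

theorem MeasureTheory.Measure.restrict_Icc_restrict_Iic {μ : Measure ℝ} {a b s : ℝ}
    (hsb : s ≤ b) :
    (μ.restrict (Icc a b)).restrict (Iic s) = μ.restrict (Icc a s) := by
  rw [Measure.restrict_restrict measurableSet_Iic]
  congr 1
  ext t
  simp only [mem_inter_iff, mem_Iic, mem_Icc]
  grind

namespace Volterra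

variable {E : Type*} [NormedAddCommGroup E] [InnerProductSpace ℝ E]
  {μ : Measure ℝ} {K : ℝ → ℝ → E →L[ℝ] E} {L : ℝ} {Y ξ : ℝ → E}

noncomputable def kernelPairing (K : ℝ → ℝ → E →L[ℝ] E) (Y ξ : ℝ → E) : ℝ × ℝ → ℝ :=
  {p : ℝ × ℝ | p.1 ≤ p.2}.indicator fun p => ⟪K p.1 p.2 (Y p.2), ξ p.1⟫

theorem integrable_kernelPairing [SFinite μ] (hK : StronglyMeasurable (Function.uncurry K))
    (hKL : ∀ t s, ‖K t s‖ ≤ L) (hY : Integrable Y μ) (hξ : Integrable ξ μ) :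
    Integrable (kernelPairing K Y ξ) (μ.prod μ) := by
  have hKY : AEStronglyMeasurable (fun p : ℝ × ℝ => K p.1 p.2 (Y p.2)) (μ.prod μ) :=
    isBoundedBilinearMap_apply.continuous.comp_aestronglyMeasurable
      (hK.aestronglyMeasurable.prodMk hY.1.comp_snd)
  have hmeas : AEStronglyMeasurable (kernelPairing K Y ξ) (μ.prod μ) :=
    (hKY.inner hξ.1.comp_fst).indicator (measurableSet_le measurable_fst measurable_snd)
  refine ((hξ.norm.const_mul L).mul_prod hY.norm).mono' hmeas (.of_forall fun p => ?_)
  calc ‖kernelPairing K Y ξ p‖ ≤ ‖⟪K p.1 p.2 (Y p.2), ξ p.1⟫‖ :=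
        norm_indicator_le_norm_self _ p
    _ ≤ ‖K p.1 p.2 (Y p.2)‖ * ‖ξ p.1‖ := norm_inner_le_norm _ _
    _ ≤ L * ‖Y p.2‖ * ‖ξ p.1‖ := by
      gcongr
      exact (K p.1 p.2).le_of_opNorm_le (hKL p.1 p.2) _
    _ = L * ‖ξ p.1‖ * ‖Y p.2‖ := by ring

variable [CompleteSpace E]

theorem integral_kernelPairing_right (hK : StronglyMeasurable (Function.uncurry K))
    (hKL : ∀ t s, ‖K t s‖ ≤ L) (hY : Integrable Y μ) (t : ℝ) :
    ∫ s, kernelPairing K Y ξ (t, s) ∂μ = ⟪∫ s in Ici t, K t s (Y s) ∂μ, ξ t⟫ := by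
  have hint : Integrable (fun s => K t s (Y s)) (μ.restrict (Ici t)) :=
    hY.restrict.clm_apply_of_norm_le
      (hK.comp_measurable (measurable_const.prodMk measurable_id)).aestronglyMeasurable (hKL t)
  rw [real_inner_comm, ← integral_inner hint, ← integral_indicator measurableSet_Ici]
  congr 1 with s
  simp [kernelPairing, indicator_apply, real_inner_comm]

theorem integral_kernelPairing_left (hK : StronglyMeasurable (Function.uncurry K))
    (hKL : ∀ t s, ‖K t s‖ ≤ L) (hξ : Integrable ξ μ) (s : ℝ) :
    ∫ t, kernelPairing K Y ξ (t, s) ∂μ =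
      ⟪Y s, ∫ t in Iic s, ContinuousLinearMap.adjoint (K t s) (ξ t) ∂μ⟫ := by
  have hint : Integrable (fun t => ContinuousLinearMap.adjoint (K t s) (ξ t))
      (μ.restrict (Iic s)) :=
    hξ.restrict.clm_apply_of_norm_le
      (ContinuousLinearMap.adjoint.continuous.comp_stronglyMeasurable
        (hK.comp_measurable (measurable_id.prodMk measurable_const))).aestronglyMeasurable
      (fun t => (LinearIsometryEquiv.norm_map _ _).trans_le (hKL t s))
  rw [← integral_inner hint, ← integral_indicator measurableSet_Iic]
  congr 1 with t
  simp [kernelPairing, indicator_apply, ContinuousLinearMap.adjoint_inner_right]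

theorem integral_inner_eq_of_adjoint_equations [SFinite μ] {ψ α : ℝ → E}
    (hK : StronglyMeasurable (Function.uncurry K)) (hKL : ∀ t s, ‖K t s‖ ≤ L)
    (hY : Integrable Y μ) (hξ : Integrable ξ μ) (hYξ : Integrable (fun t => ⟪Y t, ξ t⟫) μ)
    (hYeq : ∀ᵐ t ∂μ, Y t = ψ t + ∫ s in Ici t, K t s (Y s) ∂μ)
    (hξeq : ∀ᵐ s ∂μ, ξ s = α s + ∫ t in Iic s, ContinuousLinearMap.adjoint (K t s) (ξ t) ∂μ) :
    ∫ t, ⟪ψ t, ξ t⟫ ∂μ = ∫ t, ⟪Y t, α t⟫ ∂μ := by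
  have hΦ := integrable_kernelPairing hK hKL hY hξ
  have hψξ : (fun t => ⟪ψ t, ξ t⟫) =ᵐ[μ]
      fun t => ⟪Y t, ξ t⟫ - ∫ s, kernelPairing K Y ξ (t, s) ∂μ := by
    filter_upwards [hYeq] with t ht
    rw [integral_kernelPairing_right hK hKL hY, ht, inner_add_left]
    ring
  have hYα : (fun s => ⟪Y s, α s⟫) =ᵐ[μ]
      fun s => ⟪Y s, ξ s⟫ - ∫ t, kernelPairing K Y ξ (t, s) ∂μ := by
    filter_upwards [hξeq] with s hs
    rw [integral_kernelPairing_left hK hKL hξ, hs, inner_add_right]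
    ring
  rw [integral_congr_ae hψξ, integral_congr_ae hYα, integral_sub hYξ hΦ.integral_prod_left,
    integral_sub hYξ hΦ.integral_prod_right,
    integral_integral_swap (f := fun t s => kernelPairing K Y ξ (t, s)) hΦ]

end Volterra

theorem stmt_6_general (m : ℕ) (T : ℝ)
    (A : ℝ → ℝ → (EuclideanSpace ℝ (Fin m) →L[ℝ] EuclideanSpace ℝ (Fin m)))
    (hAmeas : StronglyMeasurable (Function.uncurry A))
    (L : ℝ) (hAbd : ∀ t s, ‖A t s‖ ≤ L)
    (ψ α Y ξ : ℝ → EuclideanSpace ℝ (Fin m))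
    (hY : MemLp Y 2 (volume.restrict (Icc 0 T)))
    (hξ : MemLp ξ 2 (volume.restrict (Icc 0 T)))
    (hYeq : ∀ᵐ t ∂(volume.restrict (Icc (0:ℝ) T)),
      Y t = ψ t + ∫ s in Icc t T, A t s (Y s))
    (hξeq : ∀ᵐ t ∂(volume.restrict (Icc (0:ℝ) T)),
      ξ t = α t + ∫ s in Icc (0:ℝ) t, ContinuousLinearMap.adjoint (A s t) (ξ s)) :
    (∫ t in Icc (0:ℝ) T, (inner ℝ (ψ t) (ξ t) : ℝ))
      = ∫ t in Icc (0:ℝ) T, (inner ℝ (Y t) (α t) : ℝ) := by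
  refine Volterra.integral_inner_eq_of_adjoint_equations hAmeas hAbd
    (hY.integrable one_le_two) (hξ.integrable one_le_two)
    (memLp_one_iff_integrable.1 ((innerSL ℝ).memLp_of_bilin 1 hY hξ)) ?_ ?_
  · filter_upwards [hYeq, ae_restrict_mem measurableSet_Icc] with t hYt ht
    rwa [Measure.restrict_Icc_restrict_Ici ht.1]
  · filter_upwards [hξeq, ae_restrict_mem measurableSet_Icc] with s hξs hs
    rwa [Measure.restrict_Icc_restrict_Iic hs.2]

/-- Deterministic duality principle: if `Y(t) = ψ(t) + ∫ₜᵀ A(t,s) Y(s) ds` and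
`ξ(t) = α(t) + ∫₀ᵗ A(s,t)ᵀ ξ(s) ds` (a.e. on `[0,T]`), then
`∫₀ᵀ ⟨ψ(t), ξ(t)⟩ dt = ∫₀ᵀ ⟨Y(t), α(t)⟩ dt`. -/
theorem stmt_6 (m : ℕ) (hm : 0 < m) (T : ℝ) (hT : 0 < T)
    (A : ℝ → ℝ → (EuclideanSpace ℝ (Fin m) →L[ℝ] EuclideanSpace ℝ (Fin m)))
    (hAmeas : StronglyMeasurable (Function.uncurry A))
    (L : ℝ) (hAbd : ∀ t s, ‖A t s‖ ≤ L)
    (ψ α Y ξ : ℝ → EuclideanSpace ℝ (Fin m))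
    (hψ : MemLp ψ 2 (volume.restrict (Icc 0 T)))
    (hα : MemLp α 2 (volume.restrict (Icc 0 T)))
    (hY : MemLp Y 2 (volume.restrict (Icc 0 T)))
    (hξ : MemLp ξ 2 (volume.restrict (Icc 0 T)))
    (hYeq : ∀ᵐ t ∂(volume.restrict (Icc (0:ℝ) T)),
      Y t = ψ t + ∫ s in Icc t T, A t s (Y s))
    (hξeq : ∀ᵐ t ∂(volume.restrict (Icc (0:ℝ) T)),
      ξ t = α t + ∫ s in Icc (0:ℝ) t, ContinuousLinearMap.adjoint (A s t) (ξ s)) :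
    (∫ t in Icc (0:ℝ) T, (inner ℝ (ψ t) (ξ t) : ℝ))
      = ∫ t in Icc (0:ℝ) T, (inner ℝ (Y t) (α t) : ℝ) :=
  stmt_6_general m T A hAmeas L hAbd ψ α Y ξ hY hξ hYeq hξeq
end
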